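/- Suppose A, B are ε-excellent subsets of a finite graph G with 0 < ε < 1/2, and let ζ = √(2ε). Then the pair (A,B) is ζ-regular and its edge density d(A,B) satisfies d(A,B) > 1 − ζ or d(A,B) < ζ. -/

import Mathlib

/-!
Excellence of `B` applied to the `ε`-good singletons `{b}` shows that `B` is `ε`-good, and
excellence of `A` applied to `B` then makes `(A, B)` `ε`-uniform with some truth value `t`.
Write `ζ = √(2ε)`, so that `ε = (ζ/2)·ζ`. For `A' ⊆ A`, `B' ⊆ B` with `|A'| ≥ ζ|A|`, `|B'| ≥ ζ|B|`,
the pairs of `A' × B'` disagreeing with `t` number fewer than `(ζ/2)|A'||B'|` from the `< ε|A|`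
exceptional rows plus at most `(ζ/2)|A'||B'|` from the others, each of which has `< ε|B|`
disagreements. So every such density lies within `ζ` of `t` and on the same side of it, which
gives both the regularity and the dichotomy for `d(A, B)`.
-/


open scoped Classical
open Finset

/-- `A` is `ε`-good in `G`: every vertex `b` partitions `A` with one side of size `< ε|A|`. -/
def Good {V : Type*} (G : SimpleGraph V) (ε : ℝ) (A : Finset V) : Prop :=
  ∀ b : V, ((A.filter fun a => G.Adj b a).card : ℝ) < ε * A.card ∨
    ((A.filter fun a => ¬ G.Adj b a).card : ℝ) < ε * A.card

/-- The majority truth value `t(a,B)` equals `1` : the non-neighbors of `a` in `B` are a minority. -/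
def Maj1 {V : Type*} (G : SimpleGraph V) (ε : ℝ) (a : V) (B : Finset V) : Prop :=
  ((B.filter fun b => ¬ G.Adj a b).card : ℝ) < ε * B.card

/-- `A` is `ε`-excellent: for every nonempty `ε`-good `B`, the majority values of elements
of `A` toward `B` agree off a set of size `< ε|A|`. -/
def Excellent {V : Type*} (G : SimpleGraph V) (ε : ℝ) (A : Finset V) : Prop :=
  ∀ B : Finset V, B.Nonempty → Good G ε B →
    ((A.filter fun a => Maj1 G ε a B).card : ℝ) < ε * A.card ∨
    ((A.filter fun a => ¬ Maj1 G ε a B).card : ℝ) < ε * A.card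

/-- `G` is `k`-edge stable: no half-graph of length `k` on `2k` distinct vertices. -/
def EdgeStable {V : Type*} (G : SimpleGraph V) (k : ℕ) : Prop :=
  ¬ ∃ a b : Fin k → V, Function.Injective (Sum.elim a b) ∧
      ∀ i j, G.Adj (a i) (b j) ↔ i < j

/-- `G` contains a full special tree of height `n`. -/
def SpecialTree {V : Type*} (G : SimpleGraph V) (n : ℕ) : Prop :=
  ∃ (b : (m : Fin n) → (Fin m → Bool) → V) (a : (Fin n → Bool) → V),
    ∀ (η : Fin n → Bool) (m : Fin n),
      G.Adj (a η) (b m fun i => η (Fin.castLE m.isLt.le i)) ↔ η m = true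

/-- Edge density between finite vertex sets. -/
noncomputable def dens {V : Type*} (G : SimpleGraph V) (A B : Finset V) : ℝ :=
  (((A ×ˢ B).filter fun p => G.Adj p.1 p.2).card : ℝ) / ((A.card : ℝ) * B.card)

/-- `(A,B)` is `ε`-regular. -/
noncomputable def Regular {V : Type*} (G : SimpleGraph V) (ε : ℝ) (A B : Finset V) : Prop :=
  ∀ A' ⊆ A, ∀ B' ⊆ B, ε * A.card ≤ (A'.card : ℝ) → ε * B.card ≤ (B'.card : ℝ) →
    |dens G A' B' - dens G A B| < ε

/-- `(A,B)` is `ε`-uniform with truth value `t`. -/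
def Uniform {V : Type*} (G : SimpleGraph V) (ε : ℝ) (A B : Finset V) (t : Bool) : Prop :=
  ((A.filter fun a =>
      ¬ (((B.filter fun b => ¬ (G.Adj a b ↔ t = true)).card : ℝ) < ε * B.card)).card : ℝ)
    < ε * A.card

namespace Rel

variable {α β : Type*} (r : α → β → Prop) [∀ a, DecidablePred (r a)]

theorem card_interedges_eq_sum (s : Finset α) (t : Finset β) :
    #(interedges r s t) = ∑ a ∈ s, #{b ∈ t | r a b} := by
  simp only [interedges, card_filter, sum_product]

variable {r}

theorem edgeDensity_lt_of_card_heavy_lt {s s' : Finset α} {t t' : Finset β} {ε δ : ℝ}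
    (hs : s' ⊆ s) (ht : t' ⊆ t) (hs' : s'.Nonempty) (ht' : t'.Nonempty)
    (hεs : ε * #s ≤ δ * #s') (hεt : ε * #t ≤ δ * #t')
    (hheavy : (#{a ∈ s | ε * #t ≤ #{b ∈ t | r a b}} : ℝ) < ε * #s) :
    (edgeDensity r s' t' : ℝ) < 2 * δ := by
  set heavy : α → Prop := fun a => ε * #t ≤ (#{b ∈ t | r a b} : ℝ)
  have hs'0 : (0 : ℝ) < #s' := by exact_mod_cast hs'.card_pos
  have ht'0 : (0 : ℝ) < #t' := by exact_mod_cast ht'.card_pos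
  have hε : 0 < ε := pos_of_mul_pos_left ((Nat.cast_nonneg _).trans_lt hheavy) (Nat.cast_nonneg _)
  have hlight : ∑ a ∈ s' with ¬ heavy a, (#{b ∈ t' | r a b} : ℝ) ≤ #s' * (δ * #t') :=
    calc ∑ a ∈ s' with ¬ heavy a, (#{b ∈ t' | r a b} : ℝ)
        ≤ ∑ a ∈ s' with ¬ heavy a, δ * #t' := sum_le_sum fun a ha => by
          have hb : (#{b ∈ t' | r a b} : ℝ) ≤ #{b ∈ t | r a b} := by
            exact_mod_cast card_le_card (filter_subset_filter _ ht)
          linarith [not_le.1 (mem_filter.1 ha).2]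
      _ ≤ #s' * (δ * #t') := by
          rw [sum_const, nsmul_eq_mul]
          gcongr
          · linarith [mul_nonneg hε.le (Nat.cast_nonneg (α := ℝ) #t)]
          · exact filter_subset _ _
  have hheavy' : ∑ a ∈ s' with heavy a, (#{b ∈ t' | r a b} : ℝ) < δ * #s' * #t' :=
    calc ∑ a ∈ s' with heavy a, (#{b ∈ t' | r a b} : ℝ)
        ≤ ∑ a ∈ s' with heavy a, (#t' : ℝ) :=
          sum_le_sum fun a _ => by exact_mod_cast card_filter_le _ _
      _ ≤ #{a ∈ s | heavy a} * #t' := by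
          rw [sum_const, nsmul_eq_mul]
          gcongr
      _ < ε * #s * #t' := by gcongr
      _ ≤ δ * #s' * #t' := by gcongr
  have hcard : (#(interedges r s' t') : ℝ) < 2 * δ * (#s' * #t') := by
    rw [card_interedges_eq_sum, Nat.cast_sum, ← sum_filter_add_sum_filter_not s' heavy]
    linarith
  rw [edgeDensity]
  push_cast
  rwa [div_lt_iff₀ (by positivity)]

end Rel

section Graph

variable {V : Type*} {G : SimpleGraph V} {ε : ℝ} {A B : Finset V}

theorem dens_eq_edgeDensity (G : SimpleGraph V) (A B : Finset V) :
    dens G A B = Rel.edgeDensity G.Adj A B := by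
  unfold _root_.dens Rel.edgeDensity
  push_cast
  rfl

theorem Good.singleton (hε : 0 < ε) (x : V) : Good G ε {x} := by
  intro b
  by_cases h : G.Adj b x <;> simp [filter_singleton, h, hε]

theorem Excellent.good (hA : Excellent G ε A) (hε0 : 0 < ε) (hε1 : ε ≤ 1) : Good G ε A := by
  intro b
  have hmaj : ∀ a, Maj1 G ε a {b} ↔ G.Adj b a := fun a => by
    by_cases h : G.Adj a b <;> simp [Maj1, filter_singleton, h, G.adj_comm b a, hε0, hε1]
  simpa only [hmaj] using hA {b} (singleton_nonempty b) (.singleton hε0 b)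

theorem Excellent.exists_uniform (hA : Excellent G ε A) (hB0 : B.Nonempty) (hB : Good G ε B) :
    ∃ t, Uniform G ε A B t := by
  rcases hA B hB0 hB with h | h
  -- `B` is good, so a vertex without majority value `1` toward `B` has few neighbours in `B`.
  · refine ⟨false, lt_of_le_of_lt (Nat.cast_le.2 (card_le_card fun a ha => ?_)) h⟩
    simp only [mem_filter, Bool.false_eq_true, iff_false, not_not] at ha ⊢
    exact ⟨ha.1, (hB a).resolve_left ha.2⟩
  · exact ⟨true, by simpa [Uniform, Maj1] using h⟩

theorem dens_mem_Icc (G : SimpleGraph V) (A B : Finset V) : dens G A B ∈ Set.Icc 0 1 := by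
  rw [dens_eq_edgeDensity]
  exact ⟨mod_cast Rel.edgeDensity_nonneg _ _ _, mod_cast Rel.edgeDensity_le_one _ _ _⟩

section Uniform

variable {δ : ℝ} {A' B' : Finset V}

theorem Uniform.dens_lt (hU : Uniform G ε A B false) (hA' : A' ⊆ A) (hB' : B' ⊆ B)
    (hA'0 : A'.Nonempty) (hB'0 : B'.Nonempty) (hεA : ε * #A ≤ δ * #A')
    (hεB : ε * #B ≤ δ * #B') : dens G A' B' < 2 * δ := by
  simp only [Uniform, Bool.false_eq_true, iff_false, not_not, not_lt] at hU
  rw [dens_eq_edgeDensity]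
  exact Rel.edgeDensity_lt_of_card_heavy_lt hA' hB' hA'0 hB'0 hεA hεB hU

theorem Uniform.one_sub_lt_dens (hU : Uniform G ε A B true) (hA' : A' ⊆ A) (hB' : B' ⊆ B)
    (hA'0 : A'.Nonempty) (hB'0 : B'.Nonempty) (hεA : ε * #A ≤ δ * #A')
    (hεB : ε * #B ≤ δ * #B') : 1 - 2 * δ < dens G A' B' := by
  simp only [Uniform, iff_true, not_lt] at hU
  have hcompl : (Rel.edgeDensity G.Adj A' B' : ℝ) + Rel.edgeDensity (fun a b => ¬ G.Adj a b) A' B'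
      = 1 := mod_cast Rel.edgeDensity_add_edgeDensity_compl G.Adj hA'0 hB'0
  have hnon := Rel.edgeDensity_lt_of_card_heavy_lt hA' hB' hA'0 hB'0 hεA hεB hU
  rw [dens_eq_edgeDensity]
  linarith

theorem Uniform.regular_and_dens {t : Bool} {ζ : ℝ} (hU : Uniform G ε A B t) (hA0 : A.Nonempty)
    (hB0 : B.Nonempty) (hζ0 : 0 < ζ) (hζ1 : ζ ≤ 1) (hεζ : ε = ζ / 2 * ζ) :
    Regular G ζ A B ∧ (1 - ζ < dens G A B ∨ dens G A B < ζ) := by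
  have near : ∀ A' ⊆ A, ∀ B' ⊆ B, ζ * #A ≤ #A' → ζ * #B ≤ #B' →
      if t then 1 - ζ < dens G A' B' else dens G A' B' < ζ := by
    intro A' hA' B' hB' hA'c hB'c
    have hA'0 : A'.Nonempty := card_pos.1 <| Nat.cast_pos.1 <|
      (mul_pos hζ0 (Nat.cast_pos.2 hA0.card_pos)).trans_le hA'c
    have hB'0 : B'.Nonempty := card_pos.1 <| Nat.cast_pos.1 <|
      (mul_pos hζ0 (Nat.cast_pos.2 hB0.card_pos)).trans_le hB'c
    have hεA : ε * #A ≤ ζ / 2 * #A' := by rw [hεζ, mul_assoc]; gcongr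
    have hεB : ε * #B ≤ ζ / 2 * #B' := by rw [hεζ, mul_assoc]; gcongr
    cases t
    · simpa [mul_div_cancel₀] using hU.dens_lt hA' hB' hA'0 hB'0 hεA hεB
    · simpa [mul_div_cancel₀] using hU.one_sub_lt_dens hA' hB' hA'0 hB'0 hεA hεB
  have hAA : ζ * #A ≤ #A := mul_le_of_le_one_left (Nat.cast_nonneg _) hζ1
  have hBB : ζ * #B ≤ #B := mul_le_of_le_one_left (Nat.cast_nonneg _) hζ1
  have hnear := near A subset_rfl B subset_rfl hAA hBB
  refine ⟨fun A' hA' B' hB' hA'c hB'c => ?_, by cases t <;> simp_all⟩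
  have hnear' := near A' hA' B' hB' hA'c hB'c
  obtain ⟨h₀, h₁⟩ := dens_mem_Icc G A B
  obtain ⟨h₀', h₁'⟩ := dens_mem_Icc G A' B'
  rw [abs_sub_lt_iff]
  cases t <;> simp only [Bool.false_eq_true, if_true, if_false] at hnear hnear' <;>
    constructor <;> linarith

end Uniform

end Graph

theorem excellent_pair_regular_general {V : Type*} (G : SimpleGraph V) (ε : ℝ)
    (A B : Finset V) (hA0 : A.Nonempty) (hB0 : B.Nonempty)
    (hA : Excellent G ε A) (hB : Excellent G ε B) (hε0 : 0 < ε) (hε : ε < 1/2) :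
    Regular G (Real.sqrt (2 * ε)) A B ∧
      (1 - Real.sqrt (2 * ε) < dens G A B ∨ dens G A B < Real.sqrt (2 * ε)) := by
  have hζ0 : 0 < √(2 * ε) := Real.sqrt_pos.2 (by linarith)
  have hζsq : √(2 * ε) * √(2 * ε) = 2 * ε := Real.mul_self_sqrt (by linarith)
  have hζ1 : √(2 * ε) ≤ 1 := by nlinarith
  obtain ⟨t, hU⟩ := hA.exists_uniform hB0 (hB.good hε0 (by linarith))
  exact hU.regular_and_dens hA0 hB0 hζ0 hζ1 (by linarith)

/-- a pair of ε-excellent sets is ζ-regular for ζ = √(2ε), with density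
> 1 - ζ or < ζ. -/
theorem excellent_pair_regular {V : Type*} [Fintype V] (G : SimpleGraph V) (ε : ℝ)
    (A B : Finset V) (hA0 : A.Nonempty) (hB0 : B.Nonempty)
    (hA : Excellent G ε A) (hB : Excellent G ε B) (hε0 : 0 < ε) (hε : ε < 1/2) :
    Regular G (Real.sqrt (2 * ε)) A B ∧
      (1 - Real.sqrt (2 * ε) < dens G A B ∨ dens G A B < Real.sqrt (2 * ε)) :=
  excellent_pair_regular_general G ε A B hA0 hB0 hA hB hε0 hε
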